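/- Existence of a non-trivial fixed point at high signal: There exist η > 0 and λ₀ > 0 such that for all λ ≥ λ₀ there exists (q₁,q₂) ∈ Γ(λ) with q₁ ≥ η and q₂ ≥ η. -/

import Mathlib

open MeasureTheory ProbabilityTheory Filter Real
open scoped Topology

noncomputable section

/-- Standard Gaussian measure on `ℝ`. -/
def stdG : Measure ℝ := gaussianReal 0 1

/-- The weight `exp(√γ·x·z + γ·x·x₀ − γ·x²/2)` appearing in the scalar Gaussian channel. -/
def scalarWeight (γ x₀ z x : ℝ) : ℝ :=
  Real.exp (Real.sqrt γ * x * z + γ * x * x₀ - γ * x ^ 2 / 2)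

/-- Free energy `ψ_P(γ)` of the scalar Gaussian channel with prior `P`. -/
def psiF (P : Measure ℝ) [IsProbabilityMeasure P] (γ : ℝ) : ℝ :=
  ∫ p : ℝ × ℝ, Real.log (∫ x, scalarWeight γ p.1 p.2 x ∂P) ∂(P.prod stdG)

/-- Posterior mean `⟨x⟩_γ` in the scalar Gaussian channel (`x₀` is the signal, `z` the noise). -/
def postMean (P : Measure ℝ) (γ x₀ z : ℝ) : ℝ :=
  (∫ x, x * scalarWeight γ x₀ z x ∂P) / (∫ x, scalarWeight γ x₀ z x ∂P)

/-- Overlap `F_P(γ) = E[X₀·⟨x⟩_γ]` of the scalar Gaussian channel. -/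
def Fov (P : Measure ℝ) [IsProbabilityMeasure P] (γ : ℝ) : ℝ :=
  ∫ p : ℝ × ℝ, p.1 * postMean P γ p.1 p.2 ∂(P.prod stdG)

/-- The set `Γ(λ)` of fixed points of the state evolution equations. -/
def Gam (PU PV : Measure ℝ) [IsProbabilityMeasure PU] [IsProbabilityMeasure PV]
    (lam : ℝ) : Set (ℝ × ℝ) :=
  {q | 0 ≤ q.1 ∧ 0 ≤ q.2 ∧ q.2 = Fov PU (lam * q.1) ∧ q.1 = Fov PV (lam * q.2)}

/-- The replica-symmetric potential `𝓕(λ,q₁,q₂)`. -/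
def rsF (PU PV : Measure ℝ) [IsProbabilityMeasure PU] [IsProbabilityMeasure PV]
    (lam q₁ q₂ : ℝ) : ℝ :=
  psiF PU (lam * q₁) + psiF PV (lam * q₂) - lam / 2 * q₁ * q₂

/-- Prior distribution of the pair of vectors `(u,v)`. -/
def prior (PU PV : Measure ℝ) [IsProbabilityMeasure PU] [IsProbabilityMeasure PV]
    (n : ℕ) : Measure ((Fin n → ℝ) × (Fin n → ℝ)) :=
  (Measure.pi fun _ => PU).prod (Measure.pi fun _ => PV)

/-- Law of the Gaussian noise matrix `Z`. -/
def noiseM (n : ℕ) : Measure (Fin n → Fin n → ℝ) :=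
  Measure.pi fun _ => Measure.pi fun _ => stdG

/-- Joint law of `((U,V),Z)`. -/
def sampleM (PU PV : Measure ℝ) [IsProbabilityMeasure PU] [IsProbabilityMeasure PV]
    (n : ℕ) : Measure (((Fin n → ℝ) × (Fin n → ℝ)) × (Fin n → Fin n → ℝ)) :=
  (prior PU PV n).prod (noiseM n)

/-- Hamiltonian `H_n(u,v)` of the planted bipartite model. -/
def Ham (lam : ℝ) (n : ℕ) (U V : Fin n → ℝ) (Z : Fin n → Fin n → ℝ)
    (u v : Fin n → ℝ) : ℝ :=
  ∑ i : Fin n, ∑ j : Fin n,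
    (Real.sqrt (lam / n) * u i * v j * Z i j
      + lam / n * (u i * U i * v j * V j)
      - lam / (2 * n) * (u i ^ 2 * v j ^ 2))

/-- Partition function `Z_n = ∫ e^{H_n(u,v)} dP₀ⁿ(u,v)`. -/
def partFun (PU PV : Measure ℝ) [IsProbabilityMeasure PU] [IsProbabilityMeasure PV]
    (lam : ℝ) (n : ℕ)
    (ω : ((Fin n → ℝ) × (Fin n → ℝ)) × (Fin n → Fin n → ℝ)) : ℝ :=
  ∫ uv, Real.exp (Ham lam n ω.1.1 ω.1.2 ω.2 uv.1 uv.2) ∂(prior PU PV n)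

/-- Free energy `F_n(λ) = (1/n)·E[log Z_n]`. -/
def freeEnergy (PU PV : Measure ℝ) [IsProbabilityMeasure PU] [IsProbabilityMeasure PV]
    (n : ℕ) (lam : ℝ) : ℝ :=
  (1 / (n : ℝ)) * ∫ ω, Real.log (partFun PU PV lam n ω) ∂(sampleM PU PV n)

/-- Gibbs (posterior) expectation `⟨f(u,v)⟩` given the realization `ω = ((U,V),Z)`. -/
def gibbs (PU PV : Measure ℝ) [IsProbabilityMeasure PU] [IsProbabilityMeasure PV]
    (lam : ℝ) (n : ℕ)
    (ω : ((Fin n → ℝ) × (Fin n → ℝ)) × (Fin n → Fin n → ℝ))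
    (f : (Fin n → ℝ) × (Fin n → ℝ) → ℝ) : ℝ :=
  (∫ uv, f uv * Real.exp (Ham lam n ω.1.1 ω.1.2 ω.2 uv.1 uv.2) ∂(prior PU PV n))
    / partFun PU PV lam n ω

/-- Rescaled scalar product `x·y = (1/n)·Σᵢ xᵢyᵢ`. -/
def ovDot (n : ℕ) (x y : Fin n → ℝ) : ℝ := (1 / (n : ℝ)) * ∑ i, x i * y i

/-!
A prior supported on a finite set is recovered exactly at infinite signal: as `γ → ∞` the posterior
mean `⟨x⟩_γ` tends to the planted value `X₀`, so `F_P(γ) → E[X₀²] > 0`; and `F_P` is continuous by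
dominated convergence, `⟨x⟩_γ` being bounded by `max |S|`. Hence, for `λ` large, the composite
`q ↦ F_{P_V}(λ F_{P_U}(λ q))` maps `η` above `η` and some `M` below `M`, and the intermediate value
theorem gives a fixed point with both coordinates at least `η`.
-/

instance : IsProbabilityMeasure stdG := by
  unfold stdG
  infer_instance

lemma tendsto_exp_sqrt_mul_sub_mul_atTop (A : ℝ) {B : ℝ} (hB : 0 < B) :
    Tendsto (fun γ => exp (√γ * A - γ * B)) atTop (𝓝 0) := by
  refine tendsto_exp_atBot.comp (Tendsto.congr' ?_ (tendsto_sqrt_atTop.atTop_mul_atBot₀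
    (tendsto_atBot_add_const_left _ A
      (tendsto_neg_atTop_atBot.comp (tendsto_sqrt_atTop.atTop_mul_const hB)))))
  filter_upwards [eventually_ge_atTop 0] with γ hγ
  simp only [Function.comp_apply]
  linear_combination -B * mul_self_sqrt hγ

lemma tendsto_scalarWeight_div_atTop (z s t : ℝ) :
    Tendsto (fun γ => scalarWeight γ t z s / scalarWeight γ t z t) atTop
      (𝓝 (if s = t then 1 else 0)) := by
  by_cases hst : s = t
  · simp only [hst, if_true, scalarWeight, div_self (exp_ne_zero _), tendsto_const_nhds]
  · simp only [hst, if_false, scalarWeight, ← exp_sub]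
    convert tendsto_exp_sqrt_mul_sub_mul_atTop ((s - t) * z)
      (by positivity : 0 < (s - t) ^ 2 / 2) using 3
    ring

lemma Finset.exists_abs_le (S : Finset ℝ) : ∃ K, ∀ x ∈ S, |x| ≤ K :=
  isBounded_iff_forall_norm_le.1 S.finite_toSet.isBounded

section FiniteSupport

variable {P : Measure ℝ} {S : Finset ℝ}

lemma integral_eq_sum_of_measure_compl_eq_zero [IsFiniteMeasure P] (hPS : P (↑S)ᶜ = 0)
    (f : ℝ → ℝ) : ∫ x, f x ∂P = ∑ s ∈ S, P.real {s} * f s := by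
  have hP : P.restrict S = P := Measure.restrict_eq_self_of_ae_mem (ae_iff.2 hPS)
  rw [← hP, setIntegral_finset S IntegrableOn.finset, hP]
  rfl

variable [IsProbabilityMeasure P]

lemma sum_measureReal_singleton_eq_one (hPS : P (↑S)ᶜ = 0) : ∑ s ∈ S, P.real {s} = 1 := by
  simpa using (integral_eq_sum_of_measure_compl_eq_zero hPS fun _ => (1 : ℝ)).symm

lemma postMean_eq_sum (hPS : P (↑S)ᶜ = 0) (γ x₀ z : ℝ) :
    postMean P γ x₀ z = (∑ s ∈ S, P.real {s} * (s * scalarWeight γ x₀ z s)) /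
      ∑ s ∈ S, P.real {s} * scalarWeight γ x₀ z s := by
  simp only [postMean, integral_eq_sum_of_measure_compl_eq_zero hPS]

lemma sum_measureReal_mul_scalarWeight_pos (hPS : P (↑S)ᶜ = 0) (γ x₀ z : ℝ) :
    0 < ∑ s ∈ S, P.real {s} * scalarWeight γ x₀ z s := by
  obtain ⟨t, ht, hPt⟩ : ∃ t ∈ S, 0 < P.real {t} := by
    by_contra! h
    have := Finset.sum_eq_zero fun s hs => (h s hs).antisymm measureReal_nonneg
    rw [sum_measureReal_singleton_eq_one hPS] at this
    exact one_ne_zero this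
  exact Finset.sum_pos' (fun s _ => mul_nonneg measureReal_nonneg (exp_pos _).le)
    ⟨t, ht, mul_pos hPt (exp_pos _)⟩

lemma abs_postMean_le {K : ℝ} (hPS : P (↑S)ᶜ = 0) (hSK : ∀ x ∈ S, |x| ≤ K) (γ x₀ z : ℝ) :
    |postMean P γ x₀ z| ≤ K := by
  have hD := sum_measureReal_mul_scalarWeight_pos hPS γ x₀ z
  rw [postMean_eq_sum hPS, abs_div, abs_of_pos hD, div_le_iff₀ hD, Finset.mul_sum]
  refine (Finset.abs_sum_le_sum_abs _ _).trans (Finset.sum_le_sum fun s hs => ?_)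
  have hw : 0 ≤ P.real {s} * scalarWeight γ x₀ z s :=
    mul_nonneg measureReal_nonneg (exp_pos _).le
  calc |P.real {s} * (s * scalarWeight γ x₀ z s)|
        = |s| * (P.real {s} * scalarWeight γ x₀ z s) := by
          rw [mul_left_comm, abs_mul, abs_of_nonneg hw]
    _ ≤ K * (P.real {s} * scalarWeight γ x₀ z s) := mul_le_mul_of_nonneg_right (hSK s hs) hw

lemma continuous_postMean (hPS : P (↑S)ᶜ = 0) :
    Continuous fun p : ℝ × ℝ × ℝ => postMean P p.1 p.2.1 p.2.2 := by
  simp only [postMean_eq_sum hPS, scalarWeight]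
  exact .div (by fun_prop) (by fun_prop) fun p =>
    (sum_measureReal_mul_scalarWeight_pos hPS _ _ _).ne'

lemma tendsto_postMean_atTop (hPS : P (↑S)ᶜ = 0) {t : ℝ} (ht : 0 < P.real {t}) (z : ℝ) :
    Tendsto (fun γ => postMean P γ t z) atTop (𝓝 t) := by
  have htS : t ∈ S := by
    by_contra h
    refine ht.ne' ?_
    rw [measureReal_def, measure_mono_null (Set.singleton_subset_iff.2 h) hPS, ENNReal.toReal_zero]
  have hlim : ∀ g : ℝ → ℝ, Tendsto (fun γ => ∑ s ∈ S,
      P.real {s} * (g s * (scalarWeight γ t z s / scalarWeight γ t z t))) atTop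
      (𝓝 (P.real {t} * g t)) := fun g => by
    simpa [htS] using tendsto_finsetSum S fun s _ =>
      ((tendsto_scalarWeight_div_atTop z s t).const_mul (g s)).const_mul (P.real {s})
  have h := (hlim id).div (by simpa using hlim 1) (by simpa using ht.ne')
  refine (mul_div_cancel_left₀ t ht.ne' ▸ h).congr fun γ => ?_
  simp only [Pi.div_apply, id, ← mul_div_assoc, ← Finset.sum_div, postMean_eq_sum hPS]
  exact div_div_div_cancel_right₀ (exp_ne_zero _) _ _

lemma Fov_eq_sum (hPS : P (↑S)ᶜ = 0) (γ : ℝ) :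
    Fov P γ = ∑ t ∈ S, P.real {t} * (t * ∫ z, postMean P γ t z ∂stdG) := by
  obtain ⟨K, hK⟩ := S.exists_abs_le
  have hint : Integrable (fun p : ℝ × ℝ => p.1 * postMean P γ p.1 p.2) (P.prod stdG) := by
    refine Integrable.mono' (integrable_const (K * K)) ?_ ?_
    · exact (continuous_fst.mul ((continuous_postMean hPS).comp
        (by fun_prop : Continuous fun p : ℝ × ℝ => (γ, p.1, p.2)))).aestronglyMeasurable
    · filter_upwards [Measure.quasiMeasurePreserving_fst.ae (ae_iff.2 hPS)] with p hp
      rw [norm_mul]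
      exact mul_le_mul (hK _ hp) (abs_postMean_le hPS hK _ _ _) (abs_nonneg _)
        ((abs_nonneg _).trans (hK _ hp))
  rw [Fov, integral_prod _ hint, integral_eq_sum_of_measure_compl_eq_zero hPS]
  simp_rw [integral_const_mul]

lemma continuous_Fov (hPS : P (↑S)ᶜ = 0) : Continuous (Fov P) := by
  obtain ⟨K, hK⟩ := S.exists_abs_le
  rw [show Fov P = _ from funext (Fov_eq_sum hPS)]
  refine continuous_finsetSum _ fun t _ => continuous_const.mul (continuous_const.mul ?_)
  exact continuous_of_dominated (bound := fun _ => K)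
    (fun γ => ((continuous_postMean hPS).comp
      (by fun_prop : Continuous fun z => (γ, t, z))).aestronglyMeasurable)
    (fun γ => ae_of_all _ fun z => abs_postMean_le hPS hK γ t z)
    (integrable_const K)
    (ae_of_all _ fun z => (continuous_postMean hPS).comp
      (by fun_prop : Continuous fun γ => (γ, t, z)))

lemma tendsto_Fov_atTop (hPS : P (↑S)ᶜ = 0) :
    Tendsto (Fov P) atTop (𝓝 (∫ x, x ^ 2 ∂P)) := by
  obtain ⟨K, hK⟩ := S.exists_abs_le
  rw [integral_eq_sum_of_measure_compl_eq_zero hPS, show Fov P = _ from funext (Fov_eq_sum hPS)]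
  refine tendsto_finsetSum _ fun t _ => ?_
  rcases (measureReal_nonneg : 0 ≤ P.real {t}).eq_or_lt with hPt | hPt
  · simp [← hPt]
  have hI := tendsto_integral_filter_of_dominated_convergence (fun _ => K)
    (.of_forall fun γ => ((continuous_postMean hPS).comp
      (by fun_prop : Continuous fun z => (γ, t, z))).aestronglyMeasurable)
    (.of_forall fun γ => ae_of_all _ fun z => abs_postMean_le hPS hK γ t z)
    (integrable_const (μ := stdG) K) (ae_of_all _ (tendsto_postMean_atTop hPS hPt))
  simpa [sq] using (hI.const_mul t).const_mul (P.real {t})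

end FiniteSupport

lemma exists_fixedPoint_mem_Icc {φ : ℝ → ℝ} {a b : ℝ} (hab : a ≤ b)
    (hφ : ContinuousOn φ (Set.Icc a b)) (ha : a ≤ φ a) (hb : φ b ≤ b) :
    ∃ q ∈ Set.Icc a b, φ q = q := by
  obtain ⟨q, hq, hq0⟩ := intermediate_value_Icc' hab (hφ.sub continuousOn_id)
    ⟨sub_nonpos.2 hb, sub_nonneg.2 ha⟩
  exact ⟨q, hq, sub_eq_zero.1 hq0⟩

lemma exists_fixedPoint_of_tendsto {f g : ℝ → ℝ} {a b : ℝ} (hf : Continuous f)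
    (hg : Continuous g) (ha : 0 < a) (hb : 0 < b) (hfa : Tendsto f atTop (𝓝 a))
    (hgb : Tendsto g atTop (𝓝 b)) :
    ∃ η > (0 : ℝ), ∃ lam₀ > (0 : ℝ), ∀ lam ≥ lam₀,
      ∃ q₁ ≥ η, ∃ q₂ ≥ η, q₂ = f (lam * q₁) ∧ q₁ = g (lam * q₂) := by
  set η := min a b / 2 with hη_def
  have hη : 0 < η := by positivity
  obtain ⟨γ₀, hγ₀⟩ : ∃ γ₀, ∀ γ ≥ γ₀,
      f γ ∈ Set.Icc (a / 2) (a + b) ∧ g γ ∈ Set.Icc (b / 2) (a + b) :=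
    eventually_atTop.1 <|
      (hfa.eventually (Icc_mem_nhds (by linarith) (by linarith))).and
        (hgb.eventually (Icc_mem_nhds (by linarith) (by linarith)))
  refine ⟨η, hη, max γ₀ 1 / η, by positivity, fun lam hlam => ?_⟩
  have hlarge : ∀ q ≥ η, γ₀ ≤ lam * q := fun q hq =>
    calc γ₀ ≤ max γ₀ 1 := le_max_left _ _
      _ = max γ₀ 1 / η * η := (div_mul_cancel₀ _ hη.ne').symm
      _ ≤ lam * q := mul_le_mul hlam hq hη.le ((by positivity : 0 < max γ₀ 1 / η).le.trans hlam)
  have hηa : η ≤ a / 2 := by linarith [min_le_left a b]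
  have hηb : η ≤ b / 2 := by linarith [min_le_right a b]
  have hf_ge : ∀ q ≥ η, η ≤ f (lam * q) := fun q hq =>
    hηa.trans (hγ₀ _ (hlarge q hq)).1.1
  have hgf_mem : ∀ q ≥ η, g (lam * f (lam * q)) ∈ Set.Icc (b / 2) (a + b) := fun q hq =>
    (hγ₀ _ (hlarge _ (hf_ge q hq))).2
  obtain ⟨q, hq, hfix⟩ := exists_fixedPoint_mem_Icc (φ := fun q => g (lam * f (lam * q)))
    (by linarith) (by fun_prop) (hηb.trans (hgf_mem η le_rfl).1)
    (hgf_mem (a + b) (by linarith)).2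
  exact ⟨q, hq.1, f (lam * q), hf_ge q hq.1, rfl, hfix.symm⟩

theorem nontrivial_fixed_point_high_signal_general
    (S : Finset ℝ)
    (PU PV : Measure ℝ) [IsProbabilityMeasure PU] [IsProbabilityMeasure PV]
    (hUS : PU ((↑S : Set ℝ)ᶜ) = 0) (hVS : PV ((↑S : Set ℝ)ᶜ) = 0)
    (hUvar : 0 < (∫ x, x ^ 2 ∂PU) - (∫ x, x ∂PU) ^ 2)
    (hVvar : 0 < (∫ x, x ^ 2 ∂PV) - (∫ x, x ∂PV) ^ 2) :
    ∃ η > (0 : ℝ), ∃ lam₀ > (0 : ℝ), ∀ lam ≥ lam₀,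
      ∃ q ∈ Gam PU PV lam, η ≤ q.1 ∧ η ≤ q.2 := by
  obtain ⟨η, hη, lam₀, hlam₀, hfix⟩ := exists_fixedPoint_of_tendsto
    (continuous_Fov hUS) (continuous_Fov hVS)
    ((sq_nonneg _).trans_lt (sub_pos.1 hUvar)) ((sq_nonneg _).trans_lt (sub_pos.1 hVvar))
    (tendsto_Fov_atTop hUS) (tendsto_Fov_atTop hVS)
  refine ⟨η, hη, lam₀, hlam₀, fun lam hlam => ?_⟩
  obtain ⟨q₁, hq₁, q₂, hq₂, h₂, h₁⟩ := hfix lam hlam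
  exact ⟨(q₁, q₂), ⟨hη.le.trans hq₁, hη.le.trans hq₂, h₂, h₁⟩, hq₁, hq₂⟩

/-- **Existence of a non-trivial fixed point at high signal.** -/
theorem nontrivial_fixed_point_high_signal
    (K₀ : ℝ) (S : Finset ℝ) (hSK : ∀ x ∈ S, |x| ≤ K₀)
    (PU PV : Measure ℝ) [IsProbabilityMeasure PU] [IsProbabilityMeasure PV]
    (hUS : PU ((↑S : Set ℝ)ᶜ) = 0) (hVS : PV ((↑S : Set ℝ)ᶜ) = 0)
    (hUvar : 0 < (∫ x, x ^ 2 ∂PU) - (∫ x, x ∂PU) ^ 2)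
    (hVvar : 0 < (∫ x, x ^ 2 ∂PV) - (∫ x, x ∂PV) ^ 2) :
    ∃ η > (0 : ℝ), ∃ lam₀ > (0 : ℝ), ∀ lam ≥ lam₀,
      ∃ q ∈ Gam PU PV lam, η ≤ q.1 ∧ η ≤ q.2 :=
  nontrivial_fixed_point_high_signal_general S PU PV hUS hVS hUvar hVvar
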